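/- arXiv:1505.04093 — 2 statements merged into one kernel-verified Lean document; each statement's English description precedes it below -/
import Mathlib

section
/- For every (u,v) ∈ g_↓ with v > 0, the set {u* ∈ [0,2m] : (u,v) and (u*,0) are mutually reachable} is nonempty and has a greatest element; likewise, for every (u,v) ∈ g↑, the set {u* ∈ [0,2m] : (u,v) and (u*,n) are mutually reachable} is nonempty and has a greatest element. -/
/-!
Reachability is a closed relation on the compact free space. Given monotone paths witnessing
reachability for pairs converging along an ultrafilter, their Kuratowski limit is again a monotone
path: it stays in the free space, it is preconnected because the paths are connected and confined
to a compact set, and it inherits the closed condition `(u - u')(v - v') ≥ 0`. So the set of `u*`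
reachable at a fixed height is compact, and attains its maximum as soon as it is nonempty.
The free space is compact because the doubled parametrisation is continuous; at `u = m` this is
exactly the closedness `x m = x 0` of the curve.
-/

open Set

noncomputable section

/-- The piecewise linear closed curve through the vertices `x 0, x 1, …`:
`f(i+α) = (1-α) • x i + α • x (i+1)`. -/
def fCurve {k : ℕ} (x : ℕ → EuclideanSpace ℝ (Fin k)) (t : ℝ) :
    EuclideanSpace ℝ (Fin k) :=
  (1 - Int.fract t) • x (⌊t⌋.toNat) + Int.fract t • x (⌊t⌋.toNat + 1)

/-- The extension of the curve from `[0,m]` to `[0,2m]` by `f(u) = f(u-m)` for `u > m`. -/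
def fCurveExt {k : ℕ} (m : ℕ) (x : ℕ → EuclideanSpace ℝ (Fin k)) (u : ℝ) :
    EuclideanSpace ℝ (Fin k) :=
  if u ≤ m then fCurve x u else fCurve x (u - m)

/-- The rectangle `D = [0,2m] × [0,n]`. -/
def Dfull (m n : ℕ) : Set (ℝ × ℝ) :=
  Icc (0:ℝ) (2*(m:ℝ)) ×ˢ Icc (0:ℝ) (n:ℝ)

/-- The free space `D_ε = {(u,v) ∈ D : dist (f_X u) (f_Y v) ≤ ε}`. -/
def Dfree {k : ℕ} (m n : ℕ) (x y : ℕ → EuclideanSpace ℝ (Fin k)) (ε : ℝ) :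
    Set (ℝ × ℝ) :=
  {p ∈ Dfull m n | dist (fCurveExt m x p.1) (fCurve y p.2) ≤ ε}

/-- The top side `T = [0,2m] × {n}` of `D`. -/
def Tside (m n : ℕ) : Set (ℝ × ℝ) := Icc (0:ℝ) (2*(m:ℝ)) ×ˢ {(n:ℝ)}

/-- The bottom side `B = [0,2m] × {0}` of `D`. -/
def Bside (m : ℕ) : Set (ℝ × ℝ) := Icc (0:ℝ) (2*(m:ℝ)) ×ˢ {(0:ℝ)}

/-- A monotone (non-decreasing) path: a connected subset `γ ⊆ Dε` with
`(u-u')·(v-v') ≥ 0` for all `(u,v), (u',v') ∈ γ`. -/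
def IsMonPath (Dε γ : Set (ℝ × ℝ)) : Prop :=
  γ ⊆ Dε ∧ IsConnected γ ∧
    ∀ p ∈ γ, ∀ q ∈ γ, (p.1 - q.1) * (p.2 - q.2) ≥ 0

/-- Two points are mutually reachable if some monotone path contains both. -/
def Reach (Dε : Set (ℝ × ℝ)) (p q : ℝ × ℝ) : Prop :=
  ∃ γ : Set (ℝ × ℝ), IsMonPath Dε γ ∧ p ∈ γ ∧ q ∈ γ

/-- `g↓`: the points of `Dε` mutually reachable with at least one point of `B`. -/
def gDown (m : ℕ) (Dε : Set (ℝ × ℝ)) : Set (ℝ × ℝ) :=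
  {p ∈ Dε | ∃ q ∈ Bside m, Reach Dε p q}

/-- `g↑`: the points of `Dε` mutually reachable with at least one point of `T`. -/
def gUp (m n : ℕ) (Dε : Set (ℝ × ℝ)) : Set (ℝ × ℝ) :=
  {p ∈ Dε | ∃ q ∈ Tside m n, Reach Dε p q}

/-- The pointer `r↑(p)`: the maximum `u* ∈ [0,2m]` such that `p` and `(u*, n)`
are mutually reachable. -/
def rUp (m n : ℕ) (Dε : Set (ℝ × ℝ)) (p : ℝ × ℝ) : ℝ :=
  sSup {u : ℝ | u ∈ Icc (0:ℝ) (2*(m:ℝ)) ∧ Reach Dε p (u, (n:ℝ))}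

/-- The pointer `r↓(p)`: for `p` with `p.2 > 0`, the maximum `u* ∈ [0,2m]` such
that `p` and `(u*, 0)` are mutually reachable; on the bottom side `r↓(u,0) = u`. -/
def rDown (m : ℕ) (Dε : Set (ℝ × ℝ)) (p : ℝ × ℝ) : ℝ :=
  if p.2 = 0 then p.1
  else sSup {u : ℝ | u ∈ Icc (0:ℝ) (2*(m:ℝ)) ∧ Reach Dε p (u, (0:ℝ))}

/-- The cell `D_ij = [i-1,i] × [j-1,j]`. -/
def cellD (i j : ℕ) : Set (ℝ × ℝ) :=
  Icc ((i:ℝ)-1) (i:ℝ) ×ˢ Icc ((j:ℝ)-1) (j:ℝ)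

/-- The top side `T_ij` of the cell `D_ij`. -/
def cellT (i j : ℕ) : Set (ℝ × ℝ) := Icc ((i:ℝ)-1) (i:ℝ) ×ˢ {(j:ℝ)}

/-- The bottom side `B_ij` of the cell `D_ij`. -/
def cellB (i j : ℕ) : Set (ℝ × ℝ) := Icc ((i:ℝ)-1) (i:ℝ) ×ˢ {((j:ℝ)-1)}

/-- The right side `R_ij` of the cell `D_ij`. -/
def cellR (i j : ℕ) : Set (ℝ × ℝ) := {(i:ℝ)} ×ˢ Icc ((j:ℝ)-1) (j:ℝ)

/-- The left side `L_ij` of the cell `D_ij`. -/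
def cellL (i j : ℕ) : Set (ℝ × ℝ) := {((i:ℝ)-1)} ×ˢ Icc ((j:ℝ)-1) (j:ℝ)

/-- The partial order `≼` on `D`: `(u1,v1) ≼ (u2,v2)` iff `u1 ≤ u2` and `v1 ≥ v2`. -/
def prec (p q : ℝ × ℝ) : Prop := p.1 ≤ q.1 ∧ q.2 ≤ p.2

open Filter Topology

section KuratowskiLimit

variable {ι X : Type*} [TopologicalSpace X] (U : Ultrafilter ι) (s : ι → Set X)

/-- Along an ultrafilter the Kuratowski upper and lower limits of `s` coincide; this is their
common value. -/
def kuratowskiLimit : Set X :=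
  {z | ∀ V ∈ 𝓝 z, ∀ᶠ i in U, (s i ∩ V).Nonempty}

variable {U s}

lemma mem_kuratowskiLimit_of_tendsto {a : ι → X} {z : X} (ha : Tendsto a U (𝓝 z))
    (has : ∀ᶠ i in U, a i ∈ s i) : z ∈ kuratowskiLimit U s := fun _ hV =>
  (has.and (ha hV)).mono fun i hi => ⟨a i, hi⟩

lemma exists_mem_nhds_eventually_disjoint_of_notMem_kuratowskiLimit {z : X}
    (hz : z ∉ kuratowskiLimit U s) : ∃ V ∈ 𝓝 z, ∀ᶠ i in U, Disjoint (s i) V := by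
  obtain ⟨V, hV, hnot⟩ := not_forall₂.mp hz
  refine ⟨V, hV, (Ultrafilter.eventually_not.mpr hnot).mono fun i hi => ?_⟩
  rwa [Set.disjoint_iff_inter_eq_empty, ← Set.not_nonempty_iff_eq_empty]

lemma isClosed_kuratowskiLimit : IsClosed (kuratowskiLimit U s) := by
  refine isOpen_compl_iff.mp (isOpen_iff_mem_nhds.mpr fun z hz => ?_)
  obtain ⟨V, hV, hdisj⟩ := exists_mem_nhds_eventually_disjoint_of_notMem_kuratowskiLimit hz
  obtain ⟨W, hWV, hW, hzW⟩ := mem_nhds_iff.mp hV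
  refine mem_of_superset (hW.mem_nhds hzW) fun w hw hwlim => ?_
  obtain ⟨i, ⟨e, hes, heW⟩, hdisj_i⟩ := ((hwlim W (hW.mem_nhds hw)).and hdisj).exists
  exact Set.disjoint_left.mp hdisj_i hes (hWV heW)

lemma kuratowskiLimit_subset {K : Set X} (hK : IsClosed K) (hsK : ∀ᶠ i in U, s i ⊆ K) :
    kuratowskiLimit U s ⊆ K := by
  intro z hz
  by_contra hzK
  obtain ⟨i, ⟨e, hes, heK⟩, hsK_i⟩ := ((hz _ (hK.isOpen_compl.mem_nhds hzK)).and hsK).exists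
  exact heK (hsK_i hes)

lemma eventually_subset_of_kuratowskiLimit_subset {K W : Set X} (hK : IsCompact K)
    (hsK : ∀ᶠ i in U, s i ⊆ K) (hW : IsOpen W) (hlim : kuratowskiLimit U s ⊆ W) :
    ∀ᶠ i in U, s i ⊆ W := by
  have hdisj : ∀ᶠ i in U, Disjoint (s i) (K \ W) := by
    refine (hK.diff hW).induction_on (p := fun t => ∀ᶠ i in U, Disjoint (s i) t)
      (by simp) (fun t t' htt' ht' => ht'.mono fun i hi => hi.mono_right htt')
      (fun t t' ht ht' => (ht.and ht').mono fun i hi => disjoint_union_right.mpr hi)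
      fun z hz => ?_
    obtain ⟨V, hV, hVdisj⟩ :=
      exists_mem_nhds_eventually_disjoint_of_notMem_kuratowskiLimit fun h => hz.2 (hlim h)
    exact ⟨V, mem_nhdsWithin_of_mem_nhds hV, hVdisj⟩
  filter_upwards [hsK, hdisj] with i hiK hidisj z hz
  by_contra hzW
  exact Set.disjoint_left.mp hidisj hz ⟨hiK hz, hzW⟩

lemma isPreconnected_kuratowskiLimit [T2Space X] {K : Set X} (hK : IsCompact K)
    (hsK : ∀ᶠ i in U, s i ⊆ K) (hs : ∀ᶠ i in U, IsPreconnected (s i)) :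
    IsPreconnected (kuratowskiLimit U s) := by
  set Γ := kuratowskiLimit U s
  have hΓ : IsCompact Γ :=
    hK.of_isClosed_subset isClosed_kuratowskiLimit (kuratowskiLimit_subset hK.isClosed hsK)
  rw [isPreconnected_iff_subset_of_fully_disjoint_closed isClosed_kuratowskiLimit]
  intro u v hu hv hcover huv
  obtain ⟨u', v', hu', hv', huu', hvv', hdisj⟩ :=
    SeparatedNhds.of_isCompact_isCompact (hΓ.inter_right hu) (hΓ.inter_right hv)
      (huv.mono inter_subset_right inter_subset_right)
  have hΓsub : Γ ⊆ u' ∪ v' := fun z hz =>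
    (hcover hz).imp (fun h => huu' ⟨hz, h⟩) (fun h => hvv' ⟨hz, h⟩)
  by_contra! h
  obtain ⟨a, haΓ, hau⟩ := not_subset.mp h.1
  obtain ⟨b, hbΓ, hbv⟩ := not_subset.mp h.2
  have hav' : a ∈ v' := hvv' ⟨haΓ, (hcover haΓ).resolve_left hau⟩
  have hbu' : b ∈ u' := huu' ⟨hbΓ, (hcover hbΓ).resolve_right hbv⟩
  obtain ⟨i, hi, hsub, ⟨a', ha's, ha'v'⟩, ⟨b', hb's, hb'u'⟩⟩ :=
    (hs.and <| (eventually_subset_of_kuratowskiLimit_subset hK hsK (hu'.union hv') hΓsub).and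
      <| (haΓ _ (hv'.mem_nhds hav')).and (hbΓ _ (hu'.mem_nhds hbu'))).exists
  rcases hi.subset_or_subset hu' hv' hdisj hsub with hiu' | hiv'
  · exact Set.disjoint_left.mp hdisj (hiu' ha's) ha'v'
  · exact Set.disjoint_left.mp hdisj hb'u' (hiv' hb's)

lemma kuratowskiLimit_pairwise_mem {R : Set (X × X)} (hR : IsClosed R)
    (hs : ∀ᶠ i in U, ∀ a ∈ s i, ∀ b ∈ s i, (a, b) ∈ R) :
    ∀ a ∈ kuratowskiLimit U s, ∀ b ∈ kuratowskiLimit U s, (a, b) ∈ R := by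
  intro a ha b hb
  by_contra hab
  obtain ⟨V, hV, W, hW, hVW⟩ := mem_nhds_prod_iff.mp (hR.isOpen_compl.mem_nhds hab)
  obtain ⟨i, hi, ⟨a', ha's, ha'V⟩, ⟨b', hb's, hb'W⟩⟩ :=
    (hs.and ((ha V hV).and (hb W hW))).exists
  exact hVW ⟨ha'V, hb'W⟩ (hi a' ha's b' hb's)

end KuratowskiLimit

section PolygonalCurve

variable {k : ℕ} (x : ℕ → EuclideanSpace ℝ (Fin k))

lemma fCurve_natCast (j : ℕ) : fCurve x j = x j := by
  simp [fCurve]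

lemma fCurve_eqOn_Icc (i : ℕ) :
    EqOn (fCurve x) (fun t => (1 - (t - i)) • x i + (t - i) • x (i + 1))
      (Icc (i : ℝ) (i + 1)) := by
  intro t ht
  rcases ht.2.eq_or_lt with rfl | hlt
  · simpa using fCurve_natCast x (i + 1)
  · have hfloor : ⌊t⌋ = i := Int.floor_eq_iff.mpr ⟨mod_cast ht.1, mod_cast hlt⟩
    simp [fCurve, hfloor, Int.fract]

lemma continuousOn_fCurve (N : ℕ) : ContinuousOn (fCurve x) (Icc 0 N) := by
  induction N with
  | zero => simp
  | succ N ih =>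
    rw [Nat.cast_succ, ← Icc_union_Icc_eq_Icc N.cast_nonneg (le_add_of_nonneg_right zero_le_one)]
    have hlast : ContinuousOn (fCurve x) (Icc (N : ℝ) (N + 1)) :=
      (by fun_prop : Continuous _).continuousOn.congr (fCurve_eqOn_Icc x N)
    exact ih.union_of_isClosed hlast isClosed_Icc isClosed_Icc

variable {x} {m : ℕ}

lemma continuousOn_fCurveExt (hx : x m = x 0) :
    ContinuousOn (fCurveExt m x) (Icc 0 (2 * m)) := by
  rw [← Icc_union_Icc_eq_Icc m.cast_nonneg (by linarith [(m.cast_nonneg : (0 : ℝ) ≤ m)])]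
  refine ContinuousOn.union_of_isClosed ?_ ?_ isClosed_Icc isClosed_Icc
  · exact (continuousOn_fCurve x m).congr fun u hu => if_pos hu.2
  · have hshift : ContinuousOn (fun u : ℝ => fCurve x (u - m)) (Icc m (2 * m)) :=
      (continuousOn_fCurve x m).comp (by fun_prop) fun u hu =>
        ⟨by linarith [hu.1], by linarith [hu.2]⟩
    refine hshift.congr fun u hu => ?_
    rcases hu.1.eq_or_lt with rfl | hmu
    · simpa [fCurveExt, fCurve_natCast, hx] using (fCurve_natCast x 0).symm
    · exact if_neg hmu.not_ge

lemma isCompact_Dfree {n : ℕ} {y : ℕ → EuclideanSpace ℝ (Fin k)} (hx : x m = x 0)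
    (ε : ℝ) :
    IsCompact (Dfree m n x y ε) := by
  have hdist : ContinuousOn (fun p : ℝ × ℝ => dist (fCurveExt m x p.1) (fCurve y p.2))
      (Dfull m n) :=
    continuous_dist.comp_continuousOn <|
      ContinuousOn.prodMk
        ((continuousOn_fCurveExt hx).comp continuousOn_fst fun _ (hp : _ ∈ Dfull m n) => hp.1)
        ((continuousOn_fCurve y n).comp continuousOn_snd fun _ (hp : _ ∈ Dfull m n) => hp.2)
  exact (isCompact_Icc.prod isCompact_Icc).of_isClosed_subset
    (hdist.preimage_isClosed_of_isClosed (isClosed_Icc.prod isClosed_Icc) isClosed_Iic)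
    (sep_subset _ _)

end PolygonalCurve

section Reachability

variable {Dε : Set (ℝ × ℝ)}

lemma isClosed_setOf_reach (hD : IsCompact Dε) :
    IsClosed {q : (ℝ × ℝ) × (ℝ × ℝ) | Reach Dε q.1 q.2} := by
  rw [isClosed_iff_ultrafilter]
  rintro ⟨a, b⟩ U hU hreach
  have hpath : ∀ q : (ℝ × ℝ) × (ℝ × ℝ),
      ∃ γ, Reach Dε q.1 q.2 → IsMonPath Dε γ ∧ q.1 ∈ γ ∧ q.2 ∈ γ :=
    fun q => (em (Reach Dε q.1 q.2)).elim (fun ⟨γ, hγ⟩ => ⟨γ, fun _ => hγ⟩)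
      fun h => ⟨∅, fun h' => absurd h' h⟩
  choose γ hγ using hpath
  have hev : ∀ᶠ q in U, IsMonPath Dε (γ q) ∧ q.1 ∈ γ q ∧ q.2 ∈ γ q :=
    Filter.mem_of_superset hreach hγ
  have ha : a ∈ kuratowskiLimit U γ := mem_kuratowskiLimit_of_tendsto
    ((continuous_fst.tendsto _).comp hU) (hev.mono fun _ h => h.2.1)
  have hb : b ∈ kuratowskiLimit U γ := mem_kuratowskiLimit_of_tendsto
    ((continuous_snd.tendsto _).comp hU) (hev.mono fun _ h => h.2.2)
  refine ⟨kuratowskiLimit U γ, ⟨kuratowskiLimit_subset hD.isClosed (hev.mono fun _ h => h.1.1),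
    ⟨⟨a, ha⟩, isPreconnected_kuratowskiLimit hD (hev.mono fun _ h => h.1.1)
      (hev.mono fun _ h => h.1.2.1.isPreconnected)⟩, ?_⟩, ha, hb⟩
  exact kuratowskiLimit_pairwise_mem
    (R := {q : (ℝ × ℝ) × (ℝ × ℝ) | 0 ≤ (q.1.1 - q.2.1) * (q.1.2 - q.2.2)})
    (isClosed_le continuous_const (by fun_prop)) (hev.mono fun _ h => h.1.2.2)

lemma isCompact_setOf_reach (hD : IsCompact Dε) (p : ℝ × ℝ) (a b c : ℝ) :
    IsCompact {u : ℝ | u ∈ Icc a b ∧ Reach Dε p (u, c)} :=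
  isCompact_Icc.inter_right
    ((isClosed_setOf_reach hD).preimage (by fun_prop : Continuous fun u : ℝ => (p, (u, c))))

lemma exists_isGreatest_setOf_reach (hD : IsCompact Dε) {p q : ℝ × ℝ} {a b c : ℝ}
    (hq : q ∈ Icc a b ×ˢ {c}) (hpq : Reach Dε p q) :
    {u : ℝ | u ∈ Icc a b ∧ Reach Dε p (u, c)}.Nonempty ∧
      ∃ u', IsGreatest {u : ℝ | u ∈ Icc a b ∧ Reach Dε p (u, c)} u' := by
  obtain ⟨u, v⟩ := q
  obtain ⟨hu, rfl : v = c⟩ := hq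
  have hne : {u : ℝ | u ∈ Icc a b ∧ Reach Dε p (u, v)}.Nonempty := ⟨u, hu, hpq⟩
  exact ⟨hne, (isCompact_setOf_reach hD p a b v).exists_isGreatest hne⟩

end Reachability

theorem stmt5_general
    (k m n : ℕ)
    (x y : ℕ → EuclideanSpace ℝ (Fin k)) (hx : x m = x 0)
    (ε : ℝ)
    (Dε : Set (ℝ × ℝ)) (hDε : Dε = Dfree m n x y ε) :
    (∀ p ∈ gDown m Dε, 0 < p.2 →
      ({u : ℝ | u ∈ Icc (0:ℝ) (2*(m:ℝ)) ∧ Reach Dε p (u, (0:ℝ))}.Nonempty ∧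
        ∃ u' : ℝ, IsGreatest {u : ℝ | u ∈ Icc (0:ℝ) (2*(m:ℝ)) ∧ Reach Dε p (u, (0:ℝ))} u')) ∧
    (∀ p ∈ gUp m n Dε,
      ({u : ℝ | u ∈ Icc (0:ℝ) (2*(m:ℝ)) ∧ Reach Dε p (u, (n:ℝ))}.Nonempty ∧
        ∃ u' : ℝ, IsGreatest {u : ℝ | u ∈ Icc (0:ℝ) (2*(m:ℝ)) ∧ Reach Dε p (u, (n:ℝ))} u')) := by
  have hD : IsCompact Dε := hDε ▸ isCompact_Dfree hx ε
  exact ⟨fun p ⟨_, _, hq, hpq⟩ _ => exists_isGreatest_setOf_reach hD hq hpq,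
    fun p ⟨_, _, hq, hpq⟩ => exists_isGreatest_setOf_reach hD hq hpq⟩

theorem stmt5
    (k m n : ℕ) (hk : 1 ≤ k) (hm : 1 ≤ m) (hn : 1 ≤ n)
    (x y : ℕ → EuclideanSpace ℝ (Fin k)) (hx : x m = x 0) (hy : y n = y 0)
    (ε : ℝ) (hε : 0 ≤ ε)
    (Dε : Set (ℝ × ℝ)) (hDε : Dε = Dfree m n x y ε) :
    (∀ p ∈ gDown m Dε, 0 < p.2 →
      ({u : ℝ | u ∈ Icc (0:ℝ) (2*(m:ℝ)) ∧ Reach Dε p (u, (0:ℝ))}.Nonempty ∧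
        ∃ u' : ℝ, IsGreatest {u : ℝ | u ∈ Icc (0:ℝ) (2*(m:ℝ)) ∧ Reach Dε p (u, (0:ℝ))} u')) ∧
    (∀ p ∈ gUp m n Dε,
      ({u : ℝ | u ∈ Icc (0:ℝ) (2*(m:ℝ)) ∧ Reach Dε p (u, (n:ℝ))}.Nonempty ∧
        ∃ u' : ℝ, IsGreatest {u : ℝ | u ∈ Icc (0:ℝ) (2*(m:ℝ)) ∧ Reach Dε p (u, (n:ℝ))} u')) :=
  stmt5_general k m n x y hx ε Dε hDε
end
end

section
/- If (u_1, v_1), (u_2, v_2) ∈ g↑ and (u_1, v_1) ≼ (u_2, v_2), then r↑(u_1, v_1) ≤ r↑(u_2, v_2). -/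
open Set

noncomputable section

/-! Monotone paths are connected chains for the componentwise order on `ℝ × ℝ`. Suppose `p` reaches
the top side at `(u, n)` and `q` reaches it only to the left of `u`. Since `q` lies to the lower
right of `p`, the path from `q` starts to the lower right of the path from `p` and ends to its upper
left, so the two paths cross; following the path of `q` up to the crossing and that of `p`
afterwards, `q` reaches `(u, n)`. -/

instance {α β : Type*} [TopologicalSpace α] [TopologicalSpace β] [Min α] [Min β]
    [ContinuousInf α] [ContinuousInf β] : ContinuousInf (α × β) where
  continuous_inf :=
    (continuous_fst.fst.inf continuous_snd.fst).prodMk (continuous_fst.snd.inf continuous_snd.snd)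

instance {α β : Type*} [TopologicalSpace α] [TopologicalSpace β] [Max α] [Max β]
    [ContinuousSup α] [ContinuousSup β] : ContinuousSup (α × β) where
  continuous_sup :=
    (continuous_fst.fst.sup continuous_snd.fst).prodMk (continuous_fst.snd.sup continuous_snd.snd)

section ChainInterval

variable {α : Type*} [Lattice α] {γ : Set α} {c d : α}

lemma IsChain.image_sup_inf_eq_inter_Icc (hγ : IsChain (· ≤ ·) γ) (hc : c ∈ γ) (hd : d ∈ γ)
    (hcd : c ≤ d) : (fun z => (z ⊔ c) ⊓ d) '' γ = γ ∩ Icc c d := by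
  ext w
  constructor
  · rintro ⟨z, hz, rfl⟩
    rcases hγ.total hz hc with hzc | hcz
    · simpa [sup_eq_right.2 hzc, inf_eq_left.2 hcd] using ⟨hc, hcd⟩
    rcases hγ.total hz hd with hzd | hdz
    · simpa [sup_eq_left.2 hcz, inf_eq_left.2 hzd] using ⟨hz, hcz, hzd⟩
    · simpa [sup_eq_left.2 hcz, inf_eq_right.2 hdz] using ⟨hd, hcd⟩
  · rintro ⟨hw, hcw, hwd⟩
    exact ⟨w, hw, by simp [sup_eq_left.2 hcw, inf_eq_left.2 hwd]⟩

lemma IsPreconnected.inter_Icc_of_isChain [TopologicalSpace α] [ContinuousInf α]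
    [ContinuousSup α] (hγ : IsPreconnected γ) (hch : IsChain (· ≤ ·) γ)
    (hc : c ∈ γ) (hd : d ∈ γ) (hcd : c ≤ d) : IsPreconnected (γ ∩ Icc c d) := by
  rw [← hch.image_sup_inf_eq_inter_Icc hc hd hcd]
  exact hγ.image _ ((continuous_id.sup continuous_const).inf continuous_const).continuousOn

end ChainInterval

section ChainParametrization

variable {γ : Set (ℝ × ℝ)} {p a z w : ℝ × ℝ}

lemma Prod.dist_le_of_le (h : z ≤ w) : dist z w ≤ (w.1 + w.2) - (z.1 + z.2) := by
  have := h.1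
  have := h.2
  rw [Prod.dist_eq, Real.dist_eq, Real.dist_eq]
  exact max_le (abs_le.2 ⟨by linarith, by linarith⟩) (abs_le.2 ⟨by linarith, by linarith⟩)

lemma IsChain.le_of_add_le (hγ : IsChain (· ≤ ·) γ) (hz : z ∈ γ) (hw : w ∈ γ)
    (h : z.1 + z.2 ≤ w.1 + w.2) : z ≤ w := by
  rcases hγ.total hz hw with hzw | ⟨h₁, h₂⟩
  · exact hzw
  · exact ⟨by linarith, by linarith⟩

lemma IsChain.dist_le (hγ : IsChain (· ≤ ·) γ) (hz : z ∈ γ) (hw : w ∈ γ) :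
    dist z w ≤ |(z.1 + z.2) - (w.1 + w.2)| := by
  rcases hγ.total hz hw with h | h
  · rw [abs_sub_comm]
    exact (Prod.dist_le_of_le h).trans (le_abs_self _)
  · rw [dist_comm]
    exact (Prod.dist_le_of_le h).trans (le_abs_self _)

lemma IsPreconnected.exists_continuousOn_param_of_isChain (hγ : IsPreconnected γ)
    (hch : IsChain (· ≤ ·) γ) (hp : p ∈ γ) (ha : a ∈ γ) :
    ∃ Z : ℝ → ℝ × ℝ, ContinuousOn Z (Icc (p.1 + p.2) (a.1 + a.2)) ∧
      ∀ s ∈ Icc (p.1 + p.2) (a.1 + a.2), Z s ∈ γ ∩ Icc p a ∧ (Z s).1 + (Z s).2 = s := by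
  set φ : ℝ × ℝ → ℝ := fun z => z.1 + z.2
  have hsurj : Icc (φ p) (φ a) ⊆ φ '' γ :=
    hγ.intermediate_value hp ha (continuous_fst.add continuous_snd).continuousOn
  set Z := Function.invFunOn φ γ
  have hZ : ∀ s ∈ Icc (φ p) (φ a), Z s ∈ γ ∧ φ (Z s) = s := fun s hs =>
    ⟨Function.invFunOn_mem (hsurj hs), Function.invFunOn_eq (hsurj hs)⟩
  refine ⟨Z, ?_, fun s hs => ?_⟩
  · refine (LipschitzOnWith.of_dist_le_mul (K := 1) fun s hs t ht => ?_).continuousOn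
    calc dist (Z s) (Z t) ≤ |φ (Z s) - φ (Z t)| := hch.dist_le (hZ s hs).1 (hZ t ht).1
      _ = (1 : NNReal) * dist s t := by rw [(hZ s hs).2, (hZ t ht).2, Real.dist_eq]; simp
  · obtain ⟨hmem, hsum⟩ := hZ s hs
    exact ⟨⟨hmem, hch.le_of_add_le hp hmem (hs.1.trans_eq hsum.symm),
      hch.le_of_add_le hmem ha (hsum.trans_le hs.2)⟩, hsum⟩

end ChainParametrization

/-- Parametrize both chains by `u + v`: on the common range of that coordinate, the difference
of their `u`-coordinates is `≤ 0` at the start and `≥ 0` at the end, so it vanishes somewhere. -/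
lemma exists_mem_inter_of_prec {γ₁ γ₂ : Set (ℝ × ℝ)} {p a q b : ℝ × ℝ}
    (hγ₁ : IsPreconnected γ₁) (hch₁ : IsChain (· ≤ ·) γ₁) (hp : p ∈ γ₁) (ha : a ∈ γ₁)
    (hγ₂ : IsPreconnected γ₂) (hch₂ : IsChain (· ≤ ·) γ₂) (hq : q ∈ γ₂) (hb : b ∈ γ₂)
    (hpa : p ≤ a) (hqb : q ≤ b) (hpq : prec p q) (hba : prec b a) :
    ∃ c ∈ γ₁ ∩ γ₂, q ≤ c ∧ c ≤ a := by
  obtain ⟨Z₁, hZ₁c, hZ₁⟩ := hγ₁.exists_continuousOn_param_of_isChain hch₁ hp ha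
  obtain ⟨Z₂, hZ₂c, hZ₂⟩ := hγ₂.exists_continuousOn_param_of_isChain hch₂ hq hb
  obtain ⟨hpa₁, hpa₂⟩ := hpa
  obtain ⟨hqb₁, hqb₂⟩ := hqb
  obtain ⟨hpq₁, hpq₂⟩ := hpq
  obtain ⟨hba₁, hba₂⟩ := hba
  set s₀ := max (p.1 + p.2) (q.1 + q.2)
  set s₁ := min (a.1 + a.2) (b.1 + b.2)
  have hs : s₀ ≤ s₁ :=
    max_le (le_min (by linarith) (by linarith)) (le_min (by linarith) (by linarith))
  have hsub₁ : Icc s₀ s₁ ⊆ Icc (p.1 + p.2) (a.1 + a.2) :=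
    Icc_subset_Icc (le_max_left _ _) (min_le_left _ _)
  have hsub₂ : Icc s₀ s₁ ⊆ Icc (q.1 + q.2) (b.1 + b.2) :=
    Icc_subset_Icc (le_max_right _ _) (min_le_right _ _)
  obtain ⟨⟨-, hpZ₀, -⟩, hZ₁s₀⟩ := hZ₁ s₀ (hsub₁ ⟨le_rfl, hs⟩)
  obtain ⟨⟨-, hqZ₀, -⟩, hZ₂s₀⟩ := hZ₂ s₀ (hsub₂ ⟨le_rfl, hs⟩)
  obtain ⟨⟨-, -, hZa₁⟩, hZ₁s₁⟩ := hZ₁ s₁ (hsub₁ ⟨hs, le_rfl⟩)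
  obtain ⟨⟨-, -, hZb₁⟩, hZ₂s₁⟩ := hZ₂ s₁ (hsub₂ ⟨hs, le_rfl⟩)
  have hleft : (Z₁ s₀).1 - (Z₂ s₀).1 ≤ 0 := by
    have := hpZ₀.1; have := hpZ₀.2; have := hqZ₀.1; have := hqZ₀.2
    rcases max_cases (p.1 + p.2) (q.1 + q.2) with ⟨h, -⟩ | ⟨h, -⟩ <;> linarith
  have hright : 0 ≤ (Z₁ s₁).1 - (Z₂ s₁).1 := by
    have := hZa₁.1; have := hZa₁.2; have := hZb₁.1; have := hZb₁.2
    rcases min_cases (a.1 + a.2) (b.1 + b.2) with ⟨h, -⟩ | ⟨h, -⟩ <;> linarith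
  obtain ⟨s, hs, hZs : (Z₁ s).1 - (Z₂ s).1 = 0⟩ := intermediate_value_Icc hs
    ((hZ₁c.mono hsub₁).fst.sub (hZ₂c.mono hsub₂).fst) ⟨hleft, hright⟩
  obtain ⟨⟨hZ₁γ, -, hZ₁a⟩, hsum₁⟩ := hZ₁ s (hsub₁ hs)
  obtain ⟨⟨hZ₂γ, hqZ₂, -⟩, hsum₂⟩ := hZ₂ s (hsub₂ hs)
  have hcross : Z₁ s = Z₂ s := Prod.ext (by linarith) (by linarith)
  exact ⟨Z₁ s, ⟨hZ₁γ, hcross ▸ hZ₂γ⟩, hcross ▸ hqZ₂, hZ₁a⟩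

section Reach

variable {Dε γ : Set (ℝ × ℝ)} {p q r a b t : ℝ × ℝ} {h : ℝ}

lemma mul_sub_nonneg_iff_le_or_le : 0 ≤ (p.1 - q.1) * (p.2 - q.2) ↔ q ≤ p ∨ p ≤ q := by
  simp only [mul_nonneg_iff, sub_nonneg, sub_nonpos, Prod.le_def]

lemma isMonPath_iff_isChain :
    IsMonPath Dε γ ↔ γ ⊆ Dε ∧ IsConnected γ ∧ IsChain (· ≤ ·) γ := by
  refine and_congr_right fun _ => and_congr_right fun _ =>
    ⟨fun h p hp q hq _ => ?_, fun h p hp q hq => ?_⟩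
  · exact (mul_sub_nonneg_iff_le_or_le.1 (h p hp q hq)).symm
  · exact mul_sub_nonneg_iff_le_or_le.2 ((h.total hp hq).symm)

lemma Reach.refl (hp : p ∈ Dε) : Reach Dε p p :=
  ⟨{p}, isMonPath_iff_isChain.2 ⟨singleton_subset_iff.2 hp, isConnected_singleton,
    subsingleton_singleton.isChain⟩, rfl, rfl⟩

lemma Reach.left_mem (hpq : Reach Dε p q) : p ∈ Dε :=
  hpq.elim fun _ hγ => hγ.1.1 hγ.2.1

lemma Reach.right_mem (hpq : Reach Dε p q) : q ∈ Dε :=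
  hpq.elim fun _ hγ => hγ.1.1 hγ.2.2

lemma Reach.le_or_le (hpq : Reach Dε p q) : p ≤ q ∨ q ≤ p := by
  obtain ⟨γ, hγ, hp, hq⟩ := hpq
  exact (isMonPath_iff_isChain.1 hγ).2.2.total hp hq

lemma Reach.trans_of_le (hpq : Reach Dε p q) (hqr : Reach Dε q r) (hle₁ : p ≤ q)
    (hle₂ : q ≤ r) : Reach Dε p r := by
  obtain ⟨γ₁, hγ₁, hp, hq₁⟩ := hpq
  obtain ⟨γ₂, hγ₂, hq₂, hr⟩ := hqr
  obtain ⟨hsub₁, hconn₁, hch₁⟩ := isMonPath_iff_isChain.1 hγ₁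
  obtain ⟨hsub₂, hconn₂, hch₂⟩ := isMonPath_iff_isChain.1 hγ₂
  have hq₁' : q ∈ γ₁ ∩ Icc p q := ⟨hq₁, hle₁, le_rfl⟩
  have hq₂' : q ∈ γ₂ ∩ Icc q r := ⟨hq₂, le_rfl, hle₂⟩
  refine ⟨γ₁ ∩ Icc p q ∪ γ₂ ∩ Icc q r, isMonPath_iff_isChain.2 ⟨?_, ?_, ?_⟩,
    Or.inl ⟨hp, le_rfl, hle₁⟩, Or.inr ⟨hr, hle₂, le_rfl⟩⟩
  · exact union_subset (inter_subset_left.trans hsub₁) (inter_subset_left.trans hsub₂)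
  · exact IsConnected.union ⟨q, hq₁', hq₂'⟩
      ⟨⟨q, hq₁'⟩, hconn₁.isPreconnected.inter_Icc_of_isChain hch₁ hp hq₁ hle₁⟩
      ⟨⟨q, hq₂'⟩, hconn₂.isPreconnected.inter_Icc_of_isChain hch₂ hq₂ hr hle₂⟩
  · rintro z (⟨hz, -, hzq⟩ | ⟨hz, hqz, -⟩) w (⟨hw, -, hwq⟩ | ⟨hw, hqw, -⟩) hzw
    · exact hch₁ hz hw hzw
    · exact Or.inl (hzq.trans hqw)
    · exact Or.inr (hwq.trans hqz)
    · exact hch₂ hz hw hzw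

lemma Reach.exists_le_of_snd_eq (hD : ∀ z ∈ Dε, z.2 ≤ h) (hrt : Reach Dε r t) (ht : t.2 = h) :
    ∃ t', Reach Dε r t' ∧ r ≤ t' ∧ t'.2 = h ∧ t.1 ≤ t'.1 := by
  rcases hrt.le_or_le with hle | hle
  · exact ⟨t, hrt, hle, ht, le_rfl⟩
  · exact ⟨r, Reach.refl hrt.left_mem, le_rfl,
      le_antisymm (hD r hrt.left_mem) (ht ▸ hle.2), hle.1⟩

lemma exists_reach_snd_eq_of_prec (hD : ∀ z ∈ Dε, z.2 ≤ h) (hpq : prec p q)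
    (hpa : Reach Dε p a) (ha : a.2 = h) (hqb : Reach Dε q b) (hb : b.2 = h) :
    ∃ b', Reach Dε q b' ∧ b'.2 = h ∧ a.1 ≤ b'.1 := by
  obtain ⟨a', hpa', hpa'_le, ha', haa'⟩ := hpa.exists_le_of_snd_eq hD ha
  obtain ⟨b', hqb', hqb'_le, hb', -⟩ := hqb.exists_le_of_snd_eq hD hb
  rcases le_total a'.1 b'.1 with hab | hba
  · exact ⟨b', hqb', hb', haa'.trans hab⟩
  obtain ⟨γ₁, hγ₁, hp₁, ha₁⟩ := hpa'
  obtain ⟨γ₂, hγ₂, hq₂, hb₂⟩ := hqb'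
  obtain ⟨-, hconn₁, hch₁⟩ := isMonPath_iff_isChain.1 hγ₁
  obtain ⟨-, hconn₂, hch₂⟩ := isMonPath_iff_isChain.1 hγ₂
  obtain ⟨c, ⟨hc₁, hc₂⟩, hqc, hca⟩ :=
    exists_mem_inter_of_prec hconn₁.isPreconnected hch₁ hp₁ ha₁ hconn₂.isPreconnected hch₂
      hq₂ hb₂ hpa'_le hqb'_le hpq ⟨hba, (ha'.trans hb'.symm).le⟩
  exact ⟨a', Reach.trans_of_le ⟨γ₂, hγ₂, hq₂, hc₂⟩ ⟨γ₁, hγ₁, hc₁, ha₁⟩ hqc hca, ha', haa'⟩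

end Reach

theorem stmt7_general
    (k m n : ℕ)
    (x y : ℕ → EuclideanSpace ℝ (Fin k))
    (ε : ℝ)
    (Dε : Set (ℝ × ℝ)) (hDε : Dε = Dfree m n x y ε)
    (p q : ℝ × ℝ) (hp : p ∈ gUp m n Dε) (hq : q ∈ gUp m n Dε)
    (hpq : prec p q) :
    rUp m n Dε p ≤ rUp m n Dε q := by
  have hD : Dε ⊆ Dfull m n := hDε ▸ fun z hz => hz.1
  obtain ⟨-, a, ⟨ha₁, ha₂⟩, hpa⟩ := hp
  obtain ⟨-, b, ⟨-, hb₂⟩, hqb⟩ := hq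
  refine csSup_le ⟨a.1, ha₁, ha₂ ▸ hpa⟩ ?_
  rintro u ⟨-, hpu⟩
  obtain ⟨b', hqb', hb', hub'⟩ :=
    exists_reach_snd_eq_of_prec (fun z hz => (hD hz).2.2) hpq hpu rfl hqb hb₂
  exact hub'.trans (le_csSup ⟨2 * m, fun _ hv => hv.1.2⟩ ⟨(hD hqb'.right_mem).1, hb' ▸ hqb'⟩)

theorem stmt7
    (k m n : ℕ) (hk : 1 ≤ k) (hm : 1 ≤ m) (hn : 1 ≤ n)
    (x y : ℕ → EuclideanSpace ℝ (Fin k)) (hx : x m = x 0) (hy : y n = y 0)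
    (ε : ℝ) (hε : 0 ≤ ε)
    (Dε : Set (ℝ × ℝ)) (hDε : Dε = Dfree m n x y ε)
    (p q : ℝ × ℝ) (hp : p ∈ gUp m n Dε) (hq : q ∈ gUp m n Dε)
    (hpq : prec p q) :
    rUp m n Dε p ≤ rUp m n Dε q :=
  stmt7_general k m n x y ε Dε hDε p q hp hq hpq
end
end
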